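/- Correctness of the reduction from the Relaxed Parity Halving Problem to the Hidden Linear Function problem: let V, E be finite types, M : Matrix V E (ZMod 2) with every column summing to zero, let x : V → Bool have even Hamming weight, and let w : E → Bool satisfy M·ŵ = x̂ over ZMod 2. Form the HLF instance on V ⊕ E with A(inl v, inr e) = A(inr e, inl v) = the {0,1}-lift of M(v,e) in ZMod 4, all other entries of A zero, b(inl v) = the lift of x_v, b(inr e) = 0. Suppose p is an HLF solution for (A, b), and write y = p∘inl : V → Bool and d = p∘inr : E → Bool. If z : V → ZMod 2 satisfies Mᵀ·z = d̂ over ZMod 2 (for every e, ∑_v M(v,e)·z_v = d̂_e), then in ZMod 2 one has (|y| : ZMod 2) + ∑_v z_v·x̂_v = ((|x|/2 : ℕ) : ZMod 2), where |y|, |x| are Hamming weights and |x| is even. -/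
import Mathlib


/-- Lift of a Boolean to `{0,1} ⊆ ZMod 4`. -/
def b4 (u : Bool) : ZMod 4 := if u then 1 else 0

/-- Lift of a Boolean to `{0,1} ⊆ ZMod 2`. -/
def b2 (u : Bool) : ZMod 2 := if u then 1 else 0

/-- Lift of `ZMod 2` to `{0,1} ⊆ ZMod 4`. -/
def lift24 (t : ZMod 2) : ZMod 4 := (t.val : ZMod 4)

/-- The quadratic form `q(u) = uᵀ A u + bᵀ u` over `ZMod 4`, on Boolean vectors. -/
def qform {ι : Type} [Fintype ι] (A : Matrix ι ι (ZMod 4)) (b : ι → ZMod 4)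
    (u : ι → Bool) : ZMod 4 :=
  (∑ i, ∑ j, A i j * b4 (u i) * b4 (u j)) + ∑ i, b i * b4 (u i)

/-- The hidden linear subspace `L_q = {u | ∀ v, q(u ⊕ v) = q(u) + q(v)}`. -/
def Lq {ι : Type} [Fintype ι] (A : Matrix ι ι (ZMod 4)) (b : ι → ZMod 4) :
    Set (ι → Bool) :=
  {u | ∀ v, qform A b (fun i => xor (u i) (v i)) = qform A b u + qform A b v}

/-- `p` is a solution of the Hidden Linear Function problem for `(A, b)` if
`q(u) = 2⟨p,u⟩` for every `u ∈ L_q`, where `⟨p,u⟩` is the mod-2 inner product. -/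
def IsHLFSolution {ι : Type} [Fintype ι] (A : Matrix ι ι (ZMod 4)) (b : ι → ZMod 4)
    (p : ι → Bool) : Prop :=
  ∀ u ∈ Lq A b, qform A b u = 2 * lift24 (∑ i, b2 (p i) * b2 (u i))

/-- The HLF matrix of the RPHP-to-HLF reduction: the `{0,1}`-lift of the incidence
matrix `M`, placed in the two off-diagonal blocks of a `(V ⊕ E) × (V ⊕ E)` matrix. -/
def hlfA {V E : Type} (M : Matrix V E (ZMod 2)) : Matrix (V ⊕ E) (V ⊕ E) (ZMod 4) :=
  fun i j => match i, j with
    | Sum.inl v, Sum.inr e => ((M v e).val : ZMod 4)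
    | Sum.inr e, Sum.inl v => ((M v e).val : ZMod 4)
    | _, _ => 0

/-- The HLF vector of the RPHP-to-HLF reduction: the lift of `x` on `V`, zero on `E`. -/
def hlfb {V E : Type} (x : V → Bool) : V ⊕ E → ZMod 4 :=
  Sum.elim (fun v => b4 (x v)) (fun _ => 0)

lemma lift24_mul (s t : ZMod 2) : lift24 (s * t) = lift24 s * lift24 t := by revert s t; decide
lemma b4_eq_lift (u : Bool) : b4 u = lift24 (b2 u) := by cases u <;> rfl
lemma b2_xor (s t : Bool) : b2 (xor s t) = b2 s + b2 t := by cases s <;> cases t <;> decide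
lemma b4_not (t : Bool) : b4 (xor true t) = 1 - b4 t := by cases t <;> decide
lemma two_lift24_add (s t : ZMod 2) : 2 * lift24 (s + t) = 2 * lift24 s + 2 * lift24 t := by revert s t; decide

def g24 : ZMod 2 →+ ZMod 4 where
  toFun t := 2 * lift24 t
  map_zero' := by decide
  map_add' := two_lift24_add

lemma sum_two_lift24 {α : Type*} (s : Finset α) (f : α → ZMod 2) :
    2 * lift24 (∑ i ∈ s, f i) = ∑ i ∈ s, 2 * lift24 (f i) :=
  map_sum g24 f s

lemma lift_term (m : ZMod 2) (s t : Bool) : lift24 m * b4 s * b4 t = lift24 (m * b2 s * b2 t) := by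
  rw [lift24_mul, lift24_mul, b4_eq_lift, b4_eq_lift]

@[simp] lemma hlfA_ll {V E : Type} (M : Matrix V E (ZMod 2)) (v v' : V) :
    hlfA M (Sum.inl v) (Sum.inl v') = 0 := rfl
@[simp] lemma hlfA_lr {V E : Type} (M : Matrix V E (ZMod 2)) (v : V) (e : E) :
    hlfA M (Sum.inl v) (Sum.inr e) = lift24 (M v e) := rfl
@[simp] lemma hlfA_rl {V E : Type} (M : Matrix V E (ZMod 2)) (v : V) (e : E) :
    hlfA M (Sum.inr e) (Sum.inl v) = lift24 (M v e) := rfl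
@[simp] lemma hlfA_rr {V E : Type} (M : Matrix V E (ZMod 2)) (e e' : E) :
    hlfA M (Sum.inr e) (Sum.inr e') = 0 := rfl
@[simp] lemma hlfb_l {V E : Type} (x : V → Bool) (v : V) :
    hlfb (E := E) x (Sum.inl v) = b4 (x v) := rfl
@[simp] lemma hlfb_r {V E : Type} (x : V → Bool) (e : E) :
    hlfb (E := E) x (Sum.inr e) = 0 := rfl

lemma qform_hlf {V E : Type} [Fintype V] [Fintype E]
    (M : Matrix V E (ZMod 2)) (x : V → Bool) (u : V ⊕ E → Bool) :
    qform (hlfA M) (hlfb x) u =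
      2 * lift24 (∑ v, ∑ e, M v e * b2 (u (Sum.inl v)) * b2 (u (Sum.inr e)))
        + ∑ v, b4 (x v) * b4 (u (Sum.inl v)) := by
  simp only [qform, Fintype.sum_sum_type, hlfA_ll, hlfA_lr, hlfA_rl, hlfA_rr,
    hlfb_l, hlfb_r, zero_mul, Finset.sum_const_zero, zero_add, add_zero]
  rw [sum_two_lift24]
  congr 1
  rw [Finset.sum_comm (γ := E) (α := V)]
  rw [← Finset.sum_add_distrib]
  refine Finset.sum_congr rfl fun v _ => ?_
  rw [sum_two_lift24, ← Finset.sum_add_distrib]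
  refine Finset.sum_congr rfl fun e _ => ?_
  rw [← lift_term]
  ring

lemma two_lift_pair (s t : Bool) : 2 * lift24 (b2 s * b2 t) = 2 * (b4 s * b4 t) := by
  cases s <;> cases t <;> decide

lemma val_cast2 (t : ZMod 2) : ((t.val : ℕ) : ZMod 2) = t := by revert t; decide

lemma cast_half (m : ℕ) (t : ZMod 2) (h : ((2 * m : ℕ) : ZMod 4) = 2 * lift24 t) :
    ((m : ℕ) : ZMod 2) = t := by
  have h2 : ((2 * m : ℕ) : ZMod 4) = ((2 * t.val : ℕ) : ZMod 4) := by
    rw [h]; unfold lift24; push_cast; ring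
  rw [ZMod.natCast_eq_natCast_iff] at h2
  have ht : t.val < 2 := t.val_lt
  have hm : m ≡ t.val [MOD 2] := by
    unfold Nat.ModEq at h2 ⊢; omega
  rw [← val_cast2 t, ZMod.natCast_eq_natCast_iff]
  exact hm

/-- Correctness of the RPHP-to-HLF reduction: if `p` is an HLF solution of the instance
built from `M` and an even-parity input `x` (with `M·ŵ = x̂` witnessing that `x̂` is in the
column span of `M`), and `z : V → ZMod 2` satisfies `Mᵀ·z = d̂` where `d = p ∘ inr`, then
`|y| + ⟨z, x⟩ ≡ |x|/2 (mod 2)` where `y = p ∘ inl`. -/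
theorem rphp_to_hlf_correct {V E : Type} [Fintype V] [Fintype E]
    (M : Matrix V E (ZMod 2)) (hM : ∀ e, ∑ v, M v e = 0)
    (x : V → Bool) (hx : Even (Finset.univ.filter fun v => x v = true).card)
    (w : E → Bool) (hw : ∀ v, ∑ e, M v e * b2 (w e) = b2 (x v))
    (p : V ⊕ E → Bool) (hp : IsHLFSolution (hlfA M) (hlfb x) p)
    (z : V → ZMod 2) (hz : ∀ e, ∑ v, M v e * z v = b2 (p (Sum.inr e))) :
    ((Finset.univ.filter fun v => p (Sum.inl v) = true).card : ZMod 2)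
        + ∑ v, z v * b2 (x v)
      = (((Finset.univ.filter fun v => x v = true).card / 2 : ℕ) : ZMod 2) := by
  classical
  set u : V ⊕ E → Bool := Sum.elim (fun _ => true) w with hu_def
  have expand : ∀ v' : V ⊕ E → Bool,
      (∑ v, ∑ e, M v e * b2 (xor (u (Sum.inl v)) (v' (Sum.inl v)))
          * b2 (xor (u (Sum.inr e)) (v' (Sum.inr e))))
      = (∑ v, ∑ e, M v e * b2 (u (Sum.inl v)) * b2 (u (Sum.inr e)))
        + ((∑ v, ∑ e, M v e * b2 (v' (Sum.inl v)) * b2 (v' (Sum.inr e)))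
          + ∑ v, b2 (x v) * b2 (v' (Sum.inl v))) := by
    intro v'
    simp only [hu_def, Sum.elim_inl, Sum.elim_inr, b2_xor]
    have hterm : ∀ (v : V) (e : E),
        M v e * (b2 true + b2 (v' (Sum.inl v))) * (b2 (w e) + b2 (v' (Sum.inr e)))
        = M v e * b2 true * b2 (w e)
          + (M v e * b2 (v' (Sum.inl v)) * b2 (v' (Sum.inr e))
            + (M v e * b2 (v' (Sum.inr e)) + M v e * b2 (v' (Sum.inl v)) * b2 (w e))) := by
      intro v e
      have : b2 true = 1 := rfl
      rw [this]; ring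
    simp only [hterm, Finset.sum_add_distrib]
    have h0 : ∑ v : V, ∑ e : E, M v e * b2 (v' (Sum.inr e)) = 0 := by
      rw [Finset.sum_comm]
      refine Finset.sum_eq_zero fun e _ => ?_
      rw [← Finset.sum_mul, hM, zero_mul]
    have h1 : ∑ v : V, ∑ e : E, M v e * b2 (v' (Sum.inl v)) * b2 (w e)
        = ∑ v, b2 (x v) * b2 (v' (Sum.inl v)) := by
      refine Finset.sum_congr rfl fun v _ => ?_
      calc ∑ e, M v e * b2 (v' (Sum.inl v)) * b2 (w e)
          = b2 (v' (Sum.inl v)) * ∑ e, M v e * b2 (w e) := by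
            rw [Finset.mul_sum]; exact Finset.sum_congr rfl fun e _ => by ring
        _ = b2 (x v) * b2 (v' (Sum.inl v)) := by rw [hw v]; ring
    rw [h0, h1]; ring
  have hu : u ∈ Lq (hlfA M) (hlfb x) := by
    intro v'
    rw [qform_hlf, qform_hlf, qform_hlf]
    rw [expand v', two_lift24_add, two_lift24_add]
    simp only [hu_def, Sum.elim_inl, Sum.elim_inr]
    have h3 : 2 * lift24 (∑ v, b2 (x v) * b2 (v' (Sum.inl v)))
        = (∑ v, b4 (x v) * b4 (v' (Sum.inl v)))
          + (∑ v, b4 (x v) * b4 (v' (Sum.inl v))) := by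
      rw [sum_two_lift24, ← Finset.sum_add_distrib]
      exact Finset.sum_congr rfl fun v _ => by rw [two_lift_pair]; ring
    have hlin : (∑ v, b4 (x v) * b4 (xor true (v' (Sum.inl v))))
        = (∑ v, b4 (x v)) - ∑ v, b4 (x v) * b4 (v' (Sum.inl v)) := by
      rw [← Finset.sum_sub_distrib]
      exact Finset.sum_congr rfl fun v _ => by rw [b4_not]; ring
    rw [hlin, h3]
    have hb4t : b4 true = 1 := rfl
    simp only [hb4t, mul_one]
    ring
  have E0 := hp u hu
  rw [qform_hlf] at E0
  have hA : (∑ v, ∑ e, M v e * b2 (u (Sum.inl v)) * b2 (u (Sum.inr e))) = 0 := by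
    have hrow : ∀ v, ∑ e, M v e * b2 (u (Sum.inl v)) * b2 (u (Sum.inr e)) = b2 (x v) := by
      intro v
      rw [← hw v]
      refine Finset.sum_congr rfl fun e _ => ?_
      simp [hu_def, b2]
    simp only [hrow]
    have hcard : (∑ v, b2 (x v)) = ((Finset.univ.filter fun v => x v = true).card : ZMod 2) := by
      simp [b2, Finset.sum_boole]
    rw [hcard]
    obtain ⟨m, hm⟩ := hx
    rw [hm]; push_cast
    exact CharTwo.add_self_eq_zero _
  rw [hA] at E0
  have hz4 : (2 : ZMod 4) * lift24 0 = 0 := rfl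
  rw [hz4, zero_add] at E0
  have hlhs : (∑ v, b4 (x v) * b4 (u (Sum.inl v)))
      = ((2 * ((Finset.univ.filter fun v => x v = true).card / 2) : ℕ) : ZMod 4) := by
    have : ∀ v : V, b4 (x v) * b4 (u (Sum.inl v)) = if x v = true then (1 : ZMod 4) else 0 := by
      intro v; simp [hu_def, b4]
    rw [Finset.sum_congr rfl fun v _ => this v, Finset.sum_boole]
    congr 1
    exact (Nat.two_mul_div_two_of_even hx).symm
  have hrhs : (∑ i, b2 (p i) * b2 (u i))
      = ((Finset.univ.filter fun v => p (Sum.inl v) = true).card : ZMod 2)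
        + ∑ v, z v * b2 (x v) := by
    rw [Fintype.sum_sum_type]
    congr 1
    · have : ∀ v : V, b2 (p (Sum.inl v)) * b2 (u (Sum.inl v))
          = if p (Sum.inl v) = true then (1 : ZMod 2) else 0 := by
        intro v; simp [hu_def, b2]
      rw [Finset.sum_congr rfl fun v _ => this v, Finset.sum_boole]
    · simp only [hu_def, Sum.elim_inr]
      calc ∑ e, b2 (p (Sum.inr e)) * b2 (w e)
          = ∑ e, (∑ v, M v e * z v) * b2 (w e) := by
            refine Finset.sum_congr rfl fun e _ => ?_; rw [hz e]
        _ = ∑ e, ∑ v, M v e * z v * b2 (w e) := by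
            refine Finset.sum_congr rfl fun e _ => ?_; rw [Finset.sum_mul]
        _ = ∑ v, ∑ e, M v e * z v * b2 (w e) := Finset.sum_comm
        _ = ∑ v, z v * b2 (x v) := by
            refine Finset.sum_congr rfl fun v _ => ?_
            rw [← hw v, Finset.mul_sum]
            exact Finset.sum_congr rfl fun e _ => by ring
  rw [hlhs, hrhs] at E0
  exact (cast_half _ _ E0).symm
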